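/- arXiv:2007.01223 — 2 statements merged into one kernel-verified Lean document; each statement's English description precedes it below -/
import Mathlib

section
/- Let T : S × A × S → ℝ be a transition function and define the wrapped transition T'(s,a,s') = T(s,a,s') if C(s,a), and T'(s,a,s') = (1/|A_C(s)|)·∑_{a' ∈ A_C(s)} T(s,a',s') otherwise. For any policy π' on the wrapped environment and its redistributed safe counterpart π (as defined by moving the unsafe-action probability mass uniformly onto safe actions), the induced state-transition kernels agree: for all s, s', ∑_{a ∈ A} π(s)(a)·T(s,a,s') = ∑_{a ∈ A} π'(s)(a)·T'(s,a,s'). -/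
/-!
Split both kernels over safe and unsafe actions. On safe actions the two sides share the term
`∑ π' a · T a`; what remains is, on the left, the unsafe mass `m` spread as `m / k` over the `k`
safe actions and, on the right, each unsafe action weighted by the safe average `(∑ T) / k`.
Both equal `m · (∑ T) / k`.
-/

open Finset

namespace Finset

variable {ι K : Type*} [Semifield K] (s : Finset ι) (P : ι → Prop) [DecidablePred P]

def redistributeMass (p : ι → K) (i : ι) : K :=
  if P i then p i + (∑ j ∈ s with ¬P j, p j) / #{j ∈ s | P j} else 0

def averageOutside (t : ι → K) (i : ι) : K :=
  if P i then t i else (∑ j ∈ s with P j, t j) / #{j ∈ s | P j}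

theorem sum_redistributeMass_mul (p t : ι → K) :
    ∑ i ∈ s, redistributeMass s P p i * t i = ∑ i ∈ s, p i * averageOutside s P t i := by
  simp only [redistributeMass, averageOutside, ite_mul, zero_mul, mul_ite]
  rw [← sum_filter, sum_ite, ← sum_mul]
  simp only [add_mul, sum_add_distrib]
  rw [← mul_sum, div_mul_eq_mul_div, mul_div_assoc]

end Finset

theorem wrapped_transition_kernels_agree_general
    {S A : Type*} [Fintype A]
    (C : S → A → Prop) [∀ s, DecidablePred (C s)]
    (T : S → A → S → ℝ)
    (T' : S → A → S → ℝ)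
    (hT' : ∀ s a s', T' s a s' =
      if C s a then T s a s'
      else (∑ a' ∈ univ.filter (C s), T s a' s') / (univ.filter (C s)).card)
    (π' : S → A → ℝ)
    (π : S → A → ℝ)
    (hπ : ∀ s a, π s a =
      if C s a then
        π' s a + (∑ a' ∈ univ.filter (fun a' => ¬ C s a'), π' s a')
                  / (univ.filter (C s)).card
      else 0) :
    ∀ s s', ∑ a, π s a * T s a s' = ∑ a, π' s a * T' s a s' := by
  intro s s'
  calc ∑ a, π s a * T s a s'
      = ∑ a, redistributeMass univ (C s) (π' s) a * T s a s' := by simp only [hπ]; rfl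
    _ = ∑ a, π' s a * averageOutside univ (C s) (T s · s') a := sum_redistributeMass_mul ..
    _ = ∑ a, π' s a * T' s a s' := by simp only [hT']; rfl

theorem wrapped_transition_kernels_agree
    {S A : Type*} [Fintype A] [Nonempty A]
    (C : S → A → Prop) [∀ s, DecidablePred (C s)]
    (hC : ∀ s, (univ.filter (C s)).Nonempty)
    (T : S → A → S → ℝ)
    (T' : S → A → S → ℝ)
    (hT' : ∀ s a s', T' s a s' =
      if C s a then T s a s'
      else (∑ a' ∈ univ.filter (C s), T s a' s') / (univ.filter (C s)).card)
    (π' : S → A → ℝ)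
    (hnn : ∀ s a, 0 ≤ π' s a)
    (hsum : ∀ s, ∑ a, π' s a = 1)
    (π : S → A → ℝ)
    (hπ : ∀ s a, π s a =
      if C s a then
        π' s a + (∑ a' ∈ univ.filter (fun a' => ¬ C s a'), π' s a')
                  / (univ.filter (C s)).card
      else 0) :
    ∀ s s', ∑ a, π s a * T s a s' = ∑ a, π' s a * T' s a s' :=
  wrapped_transition_kernels_agree_general C T T' hT' π' π hπ
end

section
/- Let R : S × A → ℝ be a reward function and define the wrapped reward R'(s,a) = R(s,a) if C(s,a), and R'(s,a) = (1/|A_C(s)|)·∑_{a' ∈ A_C(s)} R(s,a') otherwise. For any policy π' and its redistributed safe counterpart π, the expected one-step rewards agree in every state: ∑_{a ∈ A} π(s)(a)·R(s,a) = ∑_{a ∈ A} π'(s)(a)·R'(s,a). -/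
open Finset

theorem wrapped_expected_rewards_agree
    {S A : Type*} [Fintype A] [Nonempty A]
    (C : S → A → Prop) [∀ s, DecidablePred (C s)]
    (hC : ∀ s, (univ.filter (C s)).Nonempty)
    (R : S → A → ℝ)
    (R' : S → A → ℝ)
    (hR' : ∀ s a, R' s a =
      if C s a then R s a
      else (∑ a' ∈ univ.filter (C s), R s a') / (univ.filter (C s)).card)
    (π' : S → A → ℝ)
    (hnn : ∀ s a, 0 ≤ π' s a)
    (hsum : ∀ s, ∑ a, π' s a = 1)
    (π : S → A → ℝ)
    (hπ : ∀ s a, π s a =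
      if C s a then
        π' s a + (∑ a' ∈ univ.filter (fun a' => ¬ C s a'), π' s a')
                  / (univ.filter (C s)).card
      else 0) :
    ∀ s, ∑ a, π s a * R s a = ∑ a, π' s a * R' s a := by
  intro s
  have hn : ((univ.filter (C s)).card : ℝ) ≠ 0 := by
    exact_mod_cast (Finset.card_pos.mpr (hC s)).ne'
  set n : ℝ := ((univ.filter (C s)).card : ℝ)
  set T : ℝ := ∑ a' ∈ univ.filter (fun a' => ¬ C s a'), π' s a'
  set Rsum : ℝ := ∑ a' ∈ univ.filter (C s), R s a'
  rw [← Finset.sum_filter_add_sum_filter_not univ (C s) (fun a => π s a * R s a),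
      ← Finset.sum_filter_add_sum_filter_not univ (C s) (fun a => π' s a * R' s a)]
  have h1 : ∑ a ∈ univ.filter (fun a => ¬ C s a), π s a * R s a = 0 := by
    refine Finset.sum_eq_zero fun a ha => ?_
    rw [Finset.mem_filter] at ha
    rw [hπ s a, if_neg ha.2, zero_mul]
  have h2 : ∑ a ∈ univ.filter (C s), π s a * R s a =
      (∑ a ∈ univ.filter (C s), π' s a * R s a) + T / n * Rsum := by
    rw [Finset.mul_sum]
    rw [← Finset.sum_add_distrib]
    refine Finset.sum_congr rfl fun a ha => ?_
    rw [Finset.mem_filter] at ha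
    rw [hπ s a, if_pos ha.2]; ring
  have h3 : ∑ a ∈ univ.filter (C s), π' s a * R' s a =
      ∑ a ∈ univ.filter (C s), π' s a * R s a := by
    refine Finset.sum_congr rfl fun a ha => ?_
    rw [Finset.mem_filter] at ha
    rw [hR' s a, if_pos ha.2]
  have h4 : ∑ a ∈ univ.filter (fun a => ¬ C s a), π' s a * R' s a = T * (Rsum / n) := by
    calc ∑ a ∈ univ.filter (fun a => ¬ C s a), π' s a * R' s a
        = ∑ a ∈ univ.filter (fun a => ¬ C s a), π' s a * (Rsum / n) := by
          refine Finset.sum_congr rfl fun a ha => ?_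
          rw [Finset.mem_filter] at ha
          rw [hR' s a, if_neg ha.2]
      _ = T * (Rsum / n) := by rw [← Finset.sum_mul]
  rw [h1, h2, h3, h4]; ring
end
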